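/- (Least Action Principle) Fix an instruction field I and V ⊆ ℤ^d. If α is an acceptable sequence of topplings that stabilizes (η,h) in V, then m_{V,η,h}(x) ≤ m_α(x) for every x ∈ ℤ^d. -/

import Mathlib

open scoped ENNReal NNReal
open MeasureTheory

namespace ARW

/-- A site of the lattice `ℤ^d`. -/
abbrev Site (d : ℕ) := Fin d → ℤ

/-- The set `ℕ_𝔰 = ℕ ∪ {𝔰}` of possible values at a site. -/
inductive NS where
  | nat : ℕ → NS
  | s : NS
deriving DecidableEq

/-- Rank function realizing the total order `0 < 𝔰 < 1 < 2 < ⋯`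
(`𝔰` is placed at `1/2`). -/
def NS.val : NS → ℚ
  | .nat n => n
  | .s => 1/2

instance : LE NS := ⟨fun a b => a.val ≤ b.val⟩
instance : LT NS := ⟨fun a b => a.val < b.val⟩

/-- Remove one particle: `n − 1`, with `𝔰 − 1 = 0`. -/
def NS.dec : NS → NS
  | .nat 0 => .nat 0
  | .nat (n+1) => .nat n
  | .s => .nat 0

/-- Add one particle: `n + 1`, with `𝔰 + 1 = 2`. -/
def NS.inc : NS → NS
  | .nat n => .nat (n+1)
  | .s => .nat 2

/-- Multiplication by `𝔰`: `n·𝔰 = n` for `n ≥ 2`, `1·𝔰 = 𝔰`, `𝔰·𝔰 = 𝔰`. -/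
def NS.mulS : NS → NS
  | .nat 0 => .nat 0
  | .nat 1 => .s
  | .nat (n+2) => .nat (n+2)
  | .s => .s

/-- A configuration of the ARW. -/
abbrev Config (d : ℕ) := Site d → NS

/-- An odometer. -/
abbrev Odom (d : ℕ) := Site d → ℕ

/-- An instruction: either a sleep instruction `τ_{x𝔰}`, or a move instruction
`τ_{xy}` recorded through the displacement `z = y − x ≠ 0`. -/
inductive Instr (d : ℕ) where
  | sleep : Instr d
  | move : (z : Site d) → z ≠ 0 → Instr d

/-- Applying an instruction at site `x` to a configuration: `τ_{x𝔰}` replaces `η(x)` by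
`η(x)·𝔰`; `τ_{xy}` (with `y = x + z`) decreases `η(x)` by one and increases `η(y)` by one. -/
def applyInstr {d : ℕ} (x : Site d) (ι : Instr d) (η : Config d) : Config d :=
  match ι with
  | .sleep => Function.update η x (η x).mulS
  | .move z _ => fun w =>
      if w = x then (η x).dec
      else if w = x + z then (η (x + z)).inc
      else η w

/-- A field of instructions `(τ^{x,j})_{x ∈ ℤ^d, j ∈ ℕ}`. -/
abbrev InstrField (d : ℕ) := Site d → ℕ → Instr d

/-- Toppling site `x`: `Φ_x(η,h) = (τ^{x,h(x)+1} η, h + δ_x)`. -/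
def topple {d : ℕ} (I : InstrField d) (x : Site d) (s : Config d × Odom d) :
    Config d × Odom d :=
  (applyInstr x (I x (s.2 x + 1)) s.1, Function.update s.2 x (s.2 x + 1))

/-- `Φ_α` for a finite sequence `α = (x_1, …, x_k)` of sites (`x_1` acts first). -/
def toppleSeq {d : ℕ} (I : InstrField d) :
    List (Site d) → Config d × Odom d → Config d × Odom d
  | [], s => s
  | x :: α, s => toppleSeq I α (topple I x s)

/-- Site `x` is unstable for `η` if `η(x) ≥ 1`. -/
def Unstable {d : ℕ} (η : Config d) (x : Site d) : Prop := NS.nat 1 ≤ η x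

/-- Toppling `x` is acceptable for `η` if `η(x) ≠ 0`. -/
def AcceptableAt {d : ℕ} (η : Config d) (x : Site d) : Prop := η x ≠ NS.nat 0

/-- `α` is a legal sequence of topplings for `(η,h)`: each successive toppling is legal. -/
inductive LegalSeq {d : ℕ} (I : InstrField d) : List (Site d) → Config d × Odom d → Prop
  | nil (s : Config d × Odom d) : LegalSeq I [] s
  | cons {x : Site d} {α : List (Site d)} {s : Config d × Odom d} :
      Unstable s.1 x → LegalSeq I α (topple I x s) → LegalSeq I (x :: α) s

/-- `α` is an acceptable sequence of topplings for `(η,h)`. -/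
inductive AcceptableSeq {d : ℕ} (I : InstrField d) : List (Site d) → Config d × Odom d → Prop
  | nil (s : Config d × Odom d) : AcceptableSeq I [] s
  | cons {x : Site d} {α : List (Site d)} {s : Config d × Odom d} :
      AcceptableAt s.1 x → AcceptableSeq I α (topple I x s) → AcceptableSeq I (x :: α) s

/-- `η` is stable in `V`: every `x ∈ V` is stable for `η`. -/
def StableIn {d : ℕ} (η : Config d) (V : Set (Site d)) : Prop :=
  ∀ x ∈ V, ¬ Unstable η x

/-- `m_{V,η,h}(x) = sup { m_β(x) : β ⊆ V legal for (η,h) }`, as an element of `ℕ∞`. -/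
noncomputable def mV {d : ℕ} (I : InstrField d) (V : Set (Site d)) (η : Config d) (h : Odom d)
    (x : Site d) : ℕ∞ :=
  ⨆ (β : List (Site d)) (_ : (∀ y ∈ β, y ∈ V) ∧ LegalSeq I β (η, h)), (β.count x : ℕ∞)

/-- `m_{η,h} = m_{ℤ^d,η,h}`. -/
noncomputable def mFull {d : ℕ} (I : InstrField d) (η : Config d) (h : Odom d) :
    Site d → ℕ∞ :=
  mV I Set.univ η h

/-- The zero odometer. -/
def zeroOdom (d : ℕ) : Odom d := fun _ => 0

/-- `η` is `I`-stabilizable: `m_{η;I}(x) < ∞` for every `x`. -/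
def Stabilizable {d : ℕ} (I : InstrField d) (η : Config d) : Prop :=
  ∀ x : Site d, mFull I η (zeroOdom d) x < ⊤

/-- `η` is `I`-explosive: `m_{η;I}(x) = ∞` for every `x`. -/
def Explosive {d : ℕ} (I : InstrField d) (η : Config d) : Prop :=
  ∀ x : Site d, mFull I η (zeroOdom d) x = ⊤

/-! Abelian property of toppling. The first toppling `b` of a legal `β ⊆ V` is at an unstable
site of `V`; topplings elsewhere only add particles at `b`, so `b` stays unstable until it is
toppled, and therefore occurs in any acceptable `α` stabilizing in `V`. Topplings of distinct sites
commute as long as neither site is empty, so the first occurrence of `b` can be moved to the front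
of `α` without changing the outcome; removing `b` from both sequences gives an induction on `β`. -/

section LeastAction

variable {d : ℕ} {I : InstrField d}

lemma NS.inc_ne_zero (v : NS) : v.inc ≠ NS.nat 0 := by
  cases v <;> simp [NS.inc]

lemma NS.one_le_inc (v : NS) : NS.nat 1 ≤ v.inc := by
  cases v with
  | nat n =>
    show (1 : ℚ) ≤ ((n + 1 : ℕ) : ℚ)
    exact_mod_cast Nat.succ_pos n
  | s => show (1 : ℚ) ≤ (2 : ℕ); norm_num

lemma Unstable.ne_zero {η : Config d} {x : Site d} (h : Unstable η x) : η x ≠ NS.nat 0 := by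
  intro e
  rw [Unstable, e] at h
  have h' : ((1 : ℕ) : ℚ) ≤ ((0 : ℕ) : ℚ) := h
  norm_num at h'

lemma NS.dec_inc : ∀ {v : NS}, v ≠ NS.nat 0 → v.inc.dec = v.dec.inc
  | .nat 0, hv => absurd rfl hv
  | .nat (_ + 1), _ | .s, _ => rfl

lemma NS.mulS_inc : ∀ {v : NS}, v ≠ NS.nat 0 → v.inc.mulS = v.mulS.inc
  | .nat 0, hv => absurd rfl hv
  | .nat 1, _ | .nat (_ + 2), _ | .s, _ => rfl

def instrAt (x : Site d) : Instr d → Site d → NS → NS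
  | .sleep, w => if w = x then NS.mulS else id
  | .move z _, w => if w = x then NS.dec else if w = x + z then NS.inc else id

lemma applyInstr_apply (x : Site d) (ι : Instr d) (η : Config d) (w : Site d) :
    applyInstr x ι η w = instrAt x ι w (η w) := by
  cases ι with
  | sleep => by_cases hw : w = x <;> simp [applyInstr, instrAt, hw]
  | move z hz =>
    by_cases hw : w = x <;> by_cases hwz : w = x + z <;> simp [applyInstr, instrAt, hw, hwz, hz]

lemma instrAt_self (x : Site d) (ι : Instr d) :
    instrAt x ι x = NS.mulS ∨ instrAt x ι x = NS.dec := by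
  cases ι <;> simp [instrAt]

lemma instrAt_of_ne {x w : Site d} (hw : w ≠ x) (ι : Instr d) :
    instrAt x ι w = id ∨ instrAt x ι w = NS.inc := by
  cases ι with
  | sleep => simp [instrAt, hw]
  | move z hz => by_cases hwz : w = x + z <;> simp [instrAt, hw, hwz, hz]

lemma instrAt_comm {x y w : Site d} (hxy : x ≠ y) (ι κ : Instr d) {v : NS}
    (hx : w = x → v ≠ NS.nat 0) (hy : w = y → v ≠ NS.nat 0) :
    instrAt x ι w (instrAt y κ w v) = instrAt y κ w (instrAt x ι w v) := by
  have shift_comm : ∀ f g : NS → NS, (f = id ∨ f = NS.inc) → (g = id ∨ g = NS.inc) →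
      f (g v) = g (f v) := by
    rintro f g (rfl | rfl) (rfl | rfl) <;> rfl
  have self_comm : ∀ f g : NS → NS, v ≠ NS.nat 0 → (f = NS.mulS ∨ f = NS.dec) →
      (g = id ∨ g = NS.inc) → f (g v) = g (f v) := by
    rintro f g hv (rfl | rfl) (rfl | rfl)
    exacts [rfl, NS.mulS_inc hv, rfl, NS.dec_inc hv]
  by_cases hwx : w = x
  · subst hwx
    exact self_comm _ _ (hx rfl) (instrAt_self w ι) (instrAt_of_ne hxy κ)
  by_cases hwy : w = y
  · subst hwy
    exact (self_comm _ _ (hy rfl) (instrAt_self w κ) (instrAt_of_ne hwx ι)).symm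
  exact shift_comm _ _ (instrAt_of_ne hwx ι) (instrAt_of_ne hwy κ)

lemma applyInstr_comm {x y : Site d} (hxy : x ≠ y) (ι κ : Instr d) {η : Config d}
    (hx : η x ≠ NS.nat 0) (hy : η y ≠ NS.nat 0) :
    applyInstr x ι (applyInstr y κ η) = applyInstr y κ (applyInstr x ι η) := by
  funext w
  simp only [applyInstr_apply]
  exact instrAt_comm hxy ι κ (fun hw => hw ▸ hx) (fun hw => hw ▸ hy)

lemma topple_fst_of_ne {y x : Site d} (h : y ≠ x) (s : Config d × Odom d) :
    (topple I y s).1 x = s.1 x ∨ (topple I y s).1 x = (s.1 x).inc := by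
  dsimp only [topple]
  rw [applyInstr_apply]
  rcases instrAt_of_ne (Ne.symm h) (I y (s.2 y + 1)) with hid | hinc
  · exact Or.inl (by rw [hid]; rfl)
  · exact Or.inr (by rw [hinc])

lemma Unstable.topple_of_ne {y x : Site d} (h : y ≠ x) {s : Config d × Odom d}
    (hu : Unstable s.1 x) : Unstable (topple I y s).1 x := by
  rcases topple_fst_of_ne (I := I) h s with h' | h' <;> rw [Unstable, h']
  · exact hu
  · exact NS.one_le_inc _

lemma AcceptableAt.topple_of_ne {y x : Site d} (h : y ≠ x) {s : Config d × Odom d}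
    (ha : AcceptableAt s.1 x) : AcceptableAt (topple I y s).1 x := by
  rcases topple_fst_of_ne (I := I) h s with h' | h' <;> rw [AcceptableAt, h']
  · exact ha
  · exact NS.inc_ne_zero _

lemma topple_comm {x y : Site d} (hxy : x ≠ y) {s : Config d × Odom d}
    (hx : s.1 x ≠ NS.nat 0) (hy : s.1 y ≠ NS.nat 0) :
    topple I x (topple I y s) = topple I y (topple I x s) := by
  simp only [topple, Function.update_of_ne hxy, Function.update_of_ne (Ne.symm hxy)]
  rw [applyInstr_comm hxy _ _ hx hy, Function.update_comm (Ne.symm hxy)]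

lemma Unstable.toppleSeq_of_not_mem {x : Site d} {α : List (Site d)} (hx : x ∉ α)
    {s : Config d × Odom d} (hu : Unstable s.1 x) : Unstable (toppleSeq I α s).1 x := by
  induction α generalizing s with
  | nil => exact hu
  | cons y α ih =>
    rw [List.mem_cons, not_or] at hx
    exact ih hx.2 (hu.topple_of_ne (Ne.symm hx.1))

lemma AcceptableSeq.exists_perm_cons {b : Site d} {α : List (Site d)} {s : Config d × Odom d}
    (hα : AcceptableSeq I α s) (hb : Unstable s.1 b) (hbα : b ∈ α) :
    ∃ α', α.Perm (b :: α') ∧ AcceptableSeq I α' (topple I b s) ∧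
      toppleSeq I α' (topple I b s) = toppleSeq I α s := by
  induction hα with
  | nil => cases hbα
  | @cons a α s ha hα ih =>
    by_cases hab : a = b
    · subst hab
      exact ⟨α, List.Perm.refl _, hα, rfl⟩
    have hbα' : b ∈ α := (List.mem_cons.mp hbα).resolve_left (Ne.symm hab)
    obtain ⟨α', hperm, hacc, heq⟩ := ih (hb.topple_of_ne hab) hbα'
    have hcomm : topple I a (topple I b s) = topple I b (topple I a s) :=
      topple_comm hab ha hb.ne_zero
    refine ⟨a :: α', (hperm.cons a).trans (List.Perm.swap b a α'), ?_, ?_⟩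
    · exact .cons (ha.topple_of_ne (Ne.symm hab)) (hcomm ▸ hacc)
    · simp only [toppleSeq, hcomm, heq]

lemma LegalSeq.count_le_of_acceptableSeq_stableIn {V : Set (Site d)} {β : List (Site d)}
    {s : Config d × Odom d} (hβ : LegalSeq I β s) (hβV : ∀ y ∈ β, y ∈ V)
    {α : List (Site d)} (hα : AcceptableSeq I α s) (hstab : StableIn (toppleSeq I α s).1 V)
    (x : Site d) : β.count x ≤ α.count x := by
  induction hβ generalizing α with
  | nil => exact Nat.zero_le _
  | @cons b β s hb _ ih =>
    have hbα : b ∈ α := by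
      by_contra hbα
      exact hstab b (hβV b List.mem_cons_self) (hb.toppleSeq_of_not_mem hbα)
    obtain ⟨α', hperm, hacc, heq⟩ := hα.exists_perm_cons hb hbα
    have hle := ih (fun y hy => hβV y (List.mem_cons_of_mem b hy)) hacc (heq ▸ hstab)
    rw [hperm.count_eq, List.count_cons, List.count_cons]
    omega

end LeastAction

/-- **Least Action Principle**: if `α` is an acceptable sequence of topplings that
stabilizes `(η,h)` in `V`, then `m_{V,η,h} ≤ m_α`. -/
theorem least_action_principle {d : ℕ} (I : InstrField d) (V : Set (Site d))
    (η : Config d) (h : Odom d) (α : List (Site d))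
    (hα : AcceptableSeq I α (η, h))
    (hstab : StableIn (toppleSeq I α (η, h)).1 V) :
    ∀ x : Site d, mV I V η h x ≤ (α.count x : ℕ∞) := by
  intro x
  refine iSup₂_le fun β hβ => ?_
  exact_mod_cast hβ.2.count_le_of_acceptableSeq_stableIn hβ.1 hα hstab x

end ARW
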